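/- arXiv:2405.11975 — 3 statements merged into one kernel-verified Lean document; each statement's English description precedes it below -/
import Mathlib

section
/- For a Gaussian random vector X on ℝⁿ with mean μ and positive definite covariance P, and a positive definite matrix f with center g, E[exp(-½(X - g)ᵀ f⁻¹ (X - g))] = √(|f|/|f + P|) · exp(-½(g - μ)ᵀ(f + P)⁻¹(g - μ)). -/
open MeasureTheory Matrix Real

/-- The multivariate Gaussian density `N(x; μ, Σ)`. -/
noncomputable def gaussPdf {n : Type*} [Fintype n] [DecidableEq n] (m : n → ℝ)
    (S : Matrix n n ℝ) (x : n → ℝ) : ℝ :=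
  (Real.sqrt ((2 * Real.pi) ^ (Fintype.card n) * S.det))⁻¹ *
    Real.exp (-(1 / 2 : ℝ) * ((x - m) ⬝ᵥ (S⁻¹ *ᵥ (x - m))))

section Helpers

variable {k : ℕ}

open scoped MatrixOrder

lemma sqrt_pow_aux {x : ℝ} (hx : 0 ≤ x) (k : ℕ) :
    Real.sqrt (x ^ k) = Real.sqrt x ^ k := by
  calc Real.sqrt (x ^ k) = (x ^ k : ℝ) ^ ((1:ℝ)/2) := Real.sqrt_eq_rpow _
    _ = (x ^ (k:ℝ)) ^ ((1:ℝ)/2) := by rw [Real.rpow_natCast]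
    _ = x ^ ((k:ℝ) * ((1:ℝ)/2)) := by rw [← Real.rpow_mul hx]
    _ = (x ^ ((1:ℝ)/2)) ^ (k:ℝ) := by rw [mul_comm, Real.rpow_mul hx]
    _ = Real.sqrt x ^ k := by rw [← Real.sqrt_eq_rpow, Real.rpow_natCast]

lemma psd_det_nonneg {N : Matrix (Fin k) (Fin k) ℝ} (h : N.PosSemidef) : 0 ≤ N.det := by
  rw [h.1.det_eq_prod_eigenvalues]
  exact Finset.prod_nonneg fun i _ => by simpa using h.eigenvalues_nonneg i

lemma continuous_quadform (A : Matrix (Fin k) (Fin k) ℝ) :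
    Continuous fun x : Fin k → ℝ => x ⬝ᵥ (A *ᵥ x) := by
  simp only [dotProduct, mulVec, dotProduct]
  exact continuous_finset_sum _ fun i _ =>
    (continuous_apply i).mul (continuous_finset_sum _ fun j _ =>
      continuous_const.mul (continuous_apply j))

lemma integral_comp_mulVec (M : Matrix (Fin k) (Fin k) ℝ) (hM : M.det ≠ 0)
    (F : (Fin k → ℝ) → ℝ) (hF : Continuous F) :
    ∫ x : Fin k → ℝ, F (M *ᵥ x) = |M.det|⁻¹ * ∫ x : Fin k → ℝ, F x := by
  have hL : LinearMap.det (Matrix.toLin' M) = M.det := LinearMap.det_toLin' M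
  have hmap := Measure.map_linearMap_addHaar_pi_eq_smul_addHaar
    (f := Matrix.toLin' M) (by rw [hL]; exact hM) (volume : Measure (Fin k → ℝ))
  rw [hL] at hmap
  have hmeas : Measurable (Matrix.toLin' M) :=
    (Matrix.toLin' M).continuous_of_finiteDimensional.measurable
  calc ∫ x : Fin k → ℝ, F (M *ᵥ x) = ∫ x : Fin k → ℝ, F (Matrix.toLin' M x) := by
        simp only [Matrix.toLin'_apply]
    _ = ∫ y, F y ∂(Measure.map (Matrix.toLin' M) volume) :=
        (integral_map hmeas.aemeasurable hF.aestronglyMeasurable).symm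
    _ = |M.det|⁻¹ * ∫ x : Fin k → ℝ, F x := by
        rw [hmap, integral_smul_measure, ENNReal.toReal_ofReal (abs_nonneg _), abs_inv,
          smul_eq_mul]

lemma integral_exp_neg_half_dot :
    ∫ y : Fin k → ℝ, Real.exp (-(1/2 : ℝ) * (y ⬝ᵥ y)) = Real.sqrt (2*π) ^ k := by
  have h : ∀ y : Fin k → ℝ, Real.exp (-(1/2:ℝ) * (y ⬝ᵥ y))
      = ∏ i, Real.exp (-(1/2:ℝ) * (y i * y i)) := by
    intro y
    rw [← Real.exp_sum]
    congr 1
    simp [dotProduct, Finset.mul_sum]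
  simp_rw [h]
  rw [volume_pi, integral_fintype_prod_eq_prod (ι := Fin k)
    (f := fun (_ : Fin k) (t : ℝ) => Real.exp (-(1/2:ℝ)*(t*t)))]
  have h1 : ∫ t : ℝ, Real.exp (-(1/2:ℝ)*(t*t)) = Real.sqrt (2*π) := by
    simp_rw [← pow_two]
    rw [integral_gaussian (1/2 : ℝ)]
    have : π / (1/2 : ℝ) = 2 * π := by ring
    rw [this]
  simp only [h1, Finset.prod_const, Finset.card_univ, Fintype.card_fin]

lemma dot_symm_expand (M : Matrix (Fin k) (Fin k) ℝ) (hM : Mᵀ = M) (y u : Fin k → ℝ) :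
    (y + u) ⬝ᵥ (M *ᵥ (y + u))
      = y ⬝ᵥ (M *ᵥ y) + 2 * (y ⬝ᵥ (M *ᵥ u)) + u ⬝ᵥ (M *ᵥ u) := by
  have hswap : u ⬝ᵥ (M *ᵥ y) = y ⬝ᵥ (M *ᵥ u) := by
    rw [dotProduct_mulVec, ← Matrix.mulVec_transpose, hM, dotProduct_comm]
  simp only [Matrix.mulVec_add, dotProduct_add, add_dotProduct, hswap]
  ring

lemma mulVec_dot (N : Matrix (Fin k) (Fin k) ℝ) (w z : Fin k → ℝ) :
    (N *ᵥ w) ⬝ᵥ z = w ⬝ᵥ (Nᵀ *ᵥ z) := by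
  rw [dotProduct_comm, dotProduct_mulVec, ← Matrix.mulVec_transpose, dotProduct_comm]

lemma integral_exp_neg_half_quad (A : Matrix (Fin k) (Fin k) ℝ) (hA : A.PosDef) :
    ∫ x : Fin k → ℝ, Real.exp (-(1/2:ℝ) * (x ⬝ᵥ (A *ᵥ x)))
      = Real.sqrt ((2*π)^k / A.det) := by
  set B := CFC.sqrt A with hB_def
  have hBB : B * B = A := CFC.sqrt_mul_sqrt_self A hA.posSemidef.nonneg
  have hBh : Bᵀ = B := by
    rw [← Matrix.conjTranspose_eq_transpose_of_trivial]
    exact (Matrix.nonneg_iff_posSemidef.mp (CFC.sqrt_nonneg A)).1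
  have hdetB2 : B.det * B.det = A.det := by rw [← Matrix.det_mul, hBB]
  have hdetBnn : 0 ≤ B.det := psd_det_nonneg (Matrix.nonneg_iff_posSemidef.mp (CFC.sqrt_nonneg A))
  have hdetA : 0 < A.det := hA.det_pos
  have hdetBne : B.det ≠ 0 := fun h => hdetA.ne' (by rw [← hdetB2, h, mul_zero])
  have hdetB : 0 < B.det := hdetBnn.lt_of_ne (Ne.symm hdetBne)
  have hdetBA : B.det = Real.sqrt A.det := by
    rw [← hdetB2, ← pow_two, Real.sqrt_sq hdetBnn]
  have hBinvdet : B⁻¹.det = B.det⁻¹ := by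
    rw [Matrix.det_nonsing_inv, Ring.inverse_eq_inv']
  have hBinvne : B⁻¹.det ≠ 0 := by rw [hBinvdet]; exact inv_ne_zero hdetBne
  have key : ∀ y : Fin k → ℝ, (B⁻¹ *ᵥ y) ⬝ᵥ (A *ᵥ (B⁻¹ *ᵥ y)) = y ⬝ᵥ y := by
    intro y
    have h1 : A *ᵥ (B⁻¹ *ᵥ y) = B *ᵥ y := by
      rw [mulVec_mulVec, ← hBB,
        Matrix.mul_nonsing_inv_cancel_right _ _ (Ne.isUnit hdetBne)]
    rw [h1, mulVec_dot, Matrix.transpose_nonsing_inv, hBh, mulVec_mulVec,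
      Matrix.nonsing_inv_mul _ (Ne.isUnit hdetBne), one_mulVec]
  have hcont : Continuous fun x : Fin k → ℝ => Real.exp (-(1/2:ℝ) * (x ⬝ᵥ (A *ᵥ x))) :=
    Real.continuous_exp.comp (continuous_const.mul (continuous_quadform A))
  have hcov := integral_comp_mulVec B⁻¹ hBinvne
    (fun x => Real.exp (-(1/2:ℝ) * (x ⬝ᵥ (A *ᵥ x)))) hcont
  simp only [key] at hcov
  rw [integral_exp_neg_half_dot] at hcov
  have habs : |B⁻¹.det|⁻¹ = B.det := by
    rw [hBinvdet, abs_of_pos (inv_pos.mpr hdetB), inv_inv]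
  rw [habs] at hcov
  have hgoal : (∫ x : Fin k → ℝ, Real.exp (-(1/2:ℝ) * (x ⬝ᵥ (A *ᵥ x))))
      = Real.sqrt (2*π) ^ k / B.det := by
    field_simp at hcov ⊢
    linarith [hcov]
  rw [hgoal, hdetBA, Real.sqrt_div (by positivity : (0:ℝ) ≤ (2*π)^k),
    sqrt_pow_aux (by positivity : (0:ℝ) ≤ 2*π)]

end Helpers

set_option maxHeartbeats 1000000 in
/-- For `X ~ N(μ, P)` on `ℝⁿ` and a positive definite matrix `f` with center `g`,
`E[exp(-½ (X - g)ᵀ f⁻¹ (X - g))] = √(|f| / |f + P|) · exp(-½ (g - μ)ᵀ (f + P)⁻¹ (g - μ))`. -/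
theorem gaussian_expectation_of_quadratic_exponential {n : ℕ}
    (m g : Fin n → ℝ) (P f : Matrix (Fin n) (Fin n) ℝ)
    (hP : P.PosDef) (hf : f.PosDef) :
    ∫ x : Fin n → ℝ,
        gaussPdf m P x * Real.exp (-(1 / 2 : ℝ) * ((x - g) ⬝ᵥ (f⁻¹ *ᵥ (x - g)))) =
      Real.sqrt (f.det / (f + P).det) *
        Real.exp (-(1 / 2 : ℝ) * ((g - m) ⬝ᵥ ((f + P)⁻¹ *ᵥ (g - m)))) := by
  have hPu : IsUnit P.det := Ne.isUnit hP.det_pos.ne'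
  have hfu : IsUnit f.det := Ne.isUnit hf.det_pos.ne'
  set A := P⁻¹ + f⁻¹ with hAdef
  have hApd : A.PosDef := hP.inv.add hf.inv
  have hAu : IsUnit A.det := Ne.isUnit hApd.det_pos.ne'
  -- symmetry facts
  have hPt : Pᵀ = P := by
    rw [← Matrix.conjTranspose_eq_transpose_of_trivial]; exact hP.isHermitian
  have hft : fᵀ = f := by
    rw [← Matrix.conjTranspose_eq_transpose_of_trivial]; exact hf.isHermitian
  have hPit : (P⁻¹)ᵀ = P⁻¹ := by rw [Matrix.transpose_nonsing_inv, hPt]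
  have hfit : (f⁻¹)ᵀ = f⁻¹ := by rw [Matrix.transpose_nonsing_inv, hft]
  have hAt : Aᵀ = A := by rw [hAdef, Matrix.transpose_add, hPit, hfit]
  have hSt : (A⁻¹)ᵀ = A⁻¹ := by rw [Matrix.transpose_nonsing_inv, hAt]
  -- matrix identities
  have h1 : f * A * P = f + P := by
    rw [hAdef, Matrix.mul_add, Matrix.add_mul, Matrix.mul_assoc f P⁻¹ P,
      Matrix.nonsing_inv_mul P hPu, Matrix.mul_nonsing_inv f hfu, Matrix.mul_one,
      Matrix.one_mul]
  have h2 : P * A * f = f + P := by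
    rw [hAdef, Matrix.mul_add, Matrix.add_mul, Matrix.mul_assoc P f⁻¹ f,
      Matrix.nonsing_inv_mul f hfu, Matrix.mul_nonsing_inv P hPu, Matrix.mul_one,
      Matrix.one_mul, add_comm]
  have hT1 : P⁻¹ * A⁻¹ * f⁻¹ = (f + P)⁻¹ := by
    rw [← h1, Matrix.mul_inv_rev, Matrix.mul_inv_rev, Matrix.mul_assoc]
  have hT2 : f⁻¹ * A⁻¹ * P⁻¹ = (f + P)⁻¹ := by
    rw [← h2, Matrix.mul_inv_rev, Matrix.mul_inv_rev, Matrix.mul_assoc]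
  -- the center of the combined Gaussian
  set c := A⁻¹ *ᵥ (P⁻¹ *ᵥ m + f⁻¹ *ᵥ g) with hcdef
  have hu : c - m = A⁻¹ *ᵥ (f⁻¹ *ᵥ (g - m)) := by
    have h3 : f⁻¹ *ᵥ (g - m) = (P⁻¹ *ᵥ m + f⁻¹ *ᵥ g) - A *ᵥ m := by
      rw [hAdef, Matrix.add_mulVec, Matrix.mulVec_sub]
      abel
    rw [h3, Matrix.mulVec_sub, mulVec_mulVec, Matrix.nonsing_inv_mul A hAu, one_mulVec,
      hcdef]
  have hv : c - g = -(A⁻¹ *ᵥ (P⁻¹ *ᵥ (g - m))) := by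
    have h3 : -(P⁻¹ *ᵥ (g - m)) = (P⁻¹ *ᵥ m + f⁻¹ *ᵥ g) - A *ᵥ g := by
      rw [hAdef, Matrix.add_mulVec, Matrix.mulVec_sub]
      abel
    rw [← Matrix.mulVec_neg, h3, Matrix.mulVec_sub, mulVec_mulVec,
      Matrix.nonsing_inv_mul A hAu, one_mulVec, hcdef]
  -- completing the square, pointwise
  have hquad : ∀ x : Fin n → ℝ,
      (x - m) ⬝ᵥ (P⁻¹ *ᵥ (x - m)) + (x - g) ⬝ᵥ (f⁻¹ *ᵥ (x - g))
        = (x - c) ⬝ᵥ (A *ᵥ (x - c)) + (g - m) ⬝ᵥ ((f + P)⁻¹ *ᵥ (g - m)) := by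
    intro x
    have e1 : x - m = (x - c) + (c - m) := by abel
    have e2 : x - g = (x - c) + (c - g) := by abel
    rw [e1, e2, dot_symm_expand P⁻¹ hPit, dot_symm_expand f⁻¹ hfit]
    have hzero : (x - c) ⬝ᵥ (P⁻¹ *ᵥ (c - m)) + (x - c) ⬝ᵥ (f⁻¹ *ᵥ (c - g)) = 0 := by
      rw [← dotProduct_add, hu, hv]
      have hvec : P⁻¹ *ᵥ (A⁻¹ *ᵥ (f⁻¹ *ᵥ (g - m)))
          + f⁻¹ *ᵥ (-(A⁻¹ *ᵥ (P⁻¹ *ᵥ (g - m)))) = 0 := by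
        rw [Matrix.mulVec_neg, mulVec_mulVec, mulVec_mulVec, mulVec_mulVec, mulVec_mulVec,
          hT1, hT2, add_neg_cancel]
      rw [hvec, dotProduct_zero]
    have hconst : (c - m) ⬝ᵥ (P⁻¹ *ᵥ (c - m)) + (c - g) ⬝ᵥ (f⁻¹ *ᵥ (c - g))
        = (g - m) ⬝ᵥ ((f + P)⁻¹ *ᵥ (g - m)) := by
      rw [hu, hv]
      simp only [Matrix.mulVec_neg, neg_dotProduct, dotProduct_neg, neg_neg]
      simp only [mulVec_mulVec]
      rw [mulVec_dot, mulVec_dot, mulVec_mulVec, mulVec_mulVec, ← dotProduct_add,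
        ← Matrix.add_mulVec]
      congr 2
      simp only [Matrix.transpose_mul, hSt, hPit, hfit, ← Matrix.mul_assoc]
      rw [hT2, hT1]
      have e6 : (f + P)⁻¹ * A⁻¹ * f⁻¹ + (f + P)⁻¹ * A⁻¹ * P⁻¹
          = (f + P)⁻¹ * (A⁻¹ * (f⁻¹ + P⁻¹)) := by
        simp only [Matrix.mul_add, ← Matrix.mul_assoc]
      rw [e6]
      have e5 : f⁻¹ + P⁻¹ = A := by rw [hAdef, add_comm]
      rw [e5, Matrix.nonsing_inv_mul A hAu, Matrix.mul_one]
    have hq : (x - c) ⬝ᵥ (P⁻¹ *ᵥ (x - c)) + (x - c) ⬝ᵥ (f⁻¹ *ᵥ (x - c))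
        = (x - c) ⬝ᵥ (A *ᵥ (x - c)) := by
      rw [← dotProduct_add, ← Matrix.add_mulVec]
    linarith [hzero, hconst, hq]
  -- assemble the integral
  unfold gaussPdf
  simp only [Fintype.card_fin]
  have hpt : ∀ x : Fin n → ℝ,
      (Real.sqrt ((2 * π) ^ n * P.det))⁻¹ *
          Real.exp (-(1/2 : ℝ) * ((x - m) ⬝ᵥ (P⁻¹ *ᵥ (x - m)))) *
          Real.exp (-(1/2 : ℝ) * ((x - g) ⬝ᵥ (f⁻¹ *ᵥ (x - g))))
        = ((Real.sqrt ((2 * π) ^ n * P.det))⁻¹ *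
            Real.exp (-(1/2 : ℝ) * ((g - m) ⬝ᵥ ((f + P)⁻¹ *ᵥ (g - m))))) *
          Real.exp (-(1/2 : ℝ) * ((x - c) ⬝ᵥ (A *ᵥ (x - c)))) := by
    intro x
    rw [mul_assoc, ← Real.exp_add, ← mul_add, hquad x, mul_add, Real.exp_add]
    ring
  simp_rw [hpt]
  rw [MeasureTheory.integral_const_mul]
  have htrans : (∫ x : Fin n → ℝ, Real.exp (-(1/2:ℝ) * ((x - c) ⬝ᵥ (A *ᵥ (x - c)))))
      = ∫ x : Fin n → ℝ, Real.exp (-(1/2:ℝ) * (x ⬝ᵥ (A *ᵥ x))) :=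
    integral_sub_right_eq_self (μ := volume)
      (fun y : Fin n → ℝ => Real.exp (-(1/2:ℝ) * (y ⬝ᵥ (A *ᵥ y)))) c
  rw [htrans, integral_exp_neg_half_quad A hApd]
  -- final scalar computation
  have hdets : f.det * A.det * P.det = (f + P).det := by
    rw [← Matrix.det_mul, ← Matrix.det_mul, h1]
  have hnum : (Real.sqrt ((2 * π) ^ n * P.det))⁻¹ * Real.sqrt ((2*π)^n / A.det)
      = Real.sqrt (f.det / (f + P).det) := by
    have hPd0 : (0:ℝ) < P.det := hP.det_pos
    have hAd0 : (0:ℝ) < A.det := hApd.det_pos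
    have hfd0 : (0:ℝ) < f.det := hf.det_pos
    have h2pi : (0:ℝ) < (2*π)^n := by positivity
    rw [← Real.sqrt_inv, ← Real.sqrt_mul
      (inv_nonneg.mpr (mul_nonneg h2pi.le hPd0.le))]
    congr 1
    rw [← hdets]
    field_simp
  rw [mul_comm ((Real.sqrt ((2 * π) ^ n * P.det))⁻¹) _, mul_assoc, hnum, mul_comm]
end

section
/- Let a block matrix M = [[P^{xx} f⁻¹ + I, 0],[P^{yx} f⁻¹, I]] where f, P^{xx} are positive definite and blocks are conformable. Then M⁻¹ [[P^{xx}, P^{xy}],[P^{yx}, P^{yy}]] has upper-left block f(f + P^{xx})⁻¹ P^{xx} and lower-right block P^{yy} - P^{yx}(f + P^{xx})⁻¹ P^{xy}. -/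
open Matrix

/-- Covariance update after a 'no-sample' event: with
`M = [[Pxx f⁻¹ + I, 0], [Pyx f⁻¹, I]]`, the product `M⁻¹ P` has upper-left block
`f (f + Pxx)⁻¹ Pxx` and lower-right block `Pyy - Pyx (f + Pxx)⁻¹ Pxy`. -/
theorem block_inverse_covariance_update {nx ny : ℕ}
    (f Pxx : Matrix (Fin nx) (Fin nx) ℝ) (Pxy : Matrix (Fin nx) (Fin ny) ℝ)
    (Pyx : Matrix (Fin ny) (Fin nx) ℝ) (Pyy : Matrix (Fin ny) (Fin ny) ℝ)
    (hf : f.PosDef) (hPxx : Pxx.PosDef)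
    (hP : (Matrix.fromBlocks Pxx Pxy Pyx Pyy).PosSemidef) :
    ((Matrix.fromBlocks (Pxx * f⁻¹ + 1) 0 (Pyx * f⁻¹) 1)⁻¹ *
        Matrix.fromBlocks Pxx Pxy Pyx Pyy).toBlocks₁₁ =
      f * (f + Pxx)⁻¹ * Pxx ∧
    ((Matrix.fromBlocks (Pxx * f⁻¹ + 1) 0 (Pyx * f⁻¹) 1)⁻¹ *
        Matrix.fromBlocks Pxx Pxy Pyx Pyy).toBlocks₂₂ =
      Pyy - Pyx * (f + Pxx)⁻¹ * Pxy := by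
  have hfu : IsUnit f := hf.isUnit
  have hS : (f + Pxx).PosDef := hf.add hPxx
  have hSu : IsUnit (f + Pxx) := hS.isUnit
  have hfi : f⁻¹ * f = 1 := nonsing_inv_mul f (isUnit_iff_isUnit_det _ |>.1 hfu)
  have hfi' : f * f⁻¹ = 1 := mul_nonsing_inv f (isUnit_iff_isUnit_det _ |>.1 hfu)
  have hSi : (f + Pxx)⁻¹ * (f + Pxx) = 1 :=
    nonsing_inv_mul _ (isUnit_iff_isUnit_det _ |>.1 hSu)
  have hSi' : (f + Pxx) * (f + Pxx)⁻¹ = 1 :=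
    mul_nonsing_inv _ (isUnit_iff_isUnit_det _ |>.1 hSu)
  set N : Matrix (Fin nx ⊕ Fin ny) (Fin nx ⊕ Fin ny) ℝ :=
    Matrix.fromBlocks (f * (f + Pxx)⁻¹) 0 (-(Pyx * (f + Pxx)⁻¹)) 1 with hN
  have hA : Pxx * f⁻¹ + 1 = (f + Pxx) * f⁻¹ := by
    rw [add_mul, hfi', add_comm]
  have key : (Matrix.fromBlocks (Pxx * f⁻¹ + 1) 0 (Pyx * f⁻¹) 1) * N = 1 := by
    rw [hN, Matrix.fromBlocks_multiply, hA, ← Matrix.fromBlocks_one]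
    rw [Matrix.fromBlocks_inj]
    refine ⟨?_, by simp, ?_, by simp⟩
    · rw [Matrix.mul_assoc (f + Pxx), ← Matrix.mul_assoc f⁻¹, hfi, Matrix.one_mul, hSi']
      simp
    · rw [Matrix.mul_assoc Pyx, ← Matrix.mul_assoc f⁻¹, hfi, Matrix.one_mul]
      simp
  have hinv : (Matrix.fromBlocks (Pxx * f⁻¹ + 1) 0 (Pyx * f⁻¹) 1)⁻¹ = N :=
    inv_eq_right_inv key
  rw [hinv, hN, Matrix.fromBlocks_multiply]
  constructor
  · ext i j
    simp [Matrix.toBlocks₁₁, Matrix.mul_assoc]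
  · ext i j
    simp [Matrix.toBlocks₂₂, Matrix.mul_assoc, sub_eq_neg_add]
end

section
/- The Schur complement is monotone in the inverted block: for symmetric positive semidefinite P = [[P^{xx},P^{xy}],[P^{yx},P^{yy}]] with P^{xx} positive definite and any positive semidefinite f, P^{yy} - P^{yx}(f + P^{xx})⁻¹P^{xy} ≽ P^{yy} - P^{yx}(P^{xx})⁻¹P^{xy}, i.e., discarding a sample (adding noise f) never decreases the adversary's posterior covariance of Y. -/
open Matrix

/-- Monotonicity of the Schur complement in the inverted block: for a symmetric positive
semidefinite block matrix `P` with `Pxx` positive definite and any symmetric positive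
semidefinite `f`,
`Pyy - Pyx (f + Pxx)⁻¹ Pxy ≽ Pyy - Pyx Pxx⁻¹ Pxy` in the Loewner order. -/
theorem schur_complement_monotone_in_noise {nx ny : ℕ}
    (Pxx : Matrix (Fin nx) (Fin nx) ℝ) (Pxy : Matrix (Fin nx) (Fin ny) ℝ)
    (Pyx : Matrix (Fin ny) (Fin nx) ℝ) (Pyy : Matrix (Fin ny) (Fin ny) ℝ)
    (hP : (Matrix.fromBlocks Pxx Pxy Pyx Pyy).PosSemidef)
    (hPxx : Pxx.PosDef) (hPxy : Pxy = Pyxᵀ)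
    (f : Matrix (Fin nx) (Fin nx) ℝ) (hf : f.PosSemidef) :
    ((Pyy - Pyx * (f + Pxx)⁻¹ * Pxy) - (Pyy - Pyx * Pxx⁻¹ * Pxy)).PosSemidef := by
  set A := f + Pxx with hAdef
  have hA : A.PosDef := Matrix.PosDef.posSemidef_add hf hPxx
  have hA1 : A * A⁻¹ = 1 := A.mul_nonsing_inv (isUnit_iff_ne_zero.mpr hA.det_pos.ne')
  have hA2 : A⁻¹ * A = 1 := A.nonsing_inv_mul (isUnit_iff_ne_zero.mpr hA.det_pos.ne')
  have hX2 : Pxx⁻¹ * Pxx = 1 := Pxx.nonsing_inv_mul (isUnit_iff_ne_zero.mpr hPxx.det_pos.ne')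
  -- the key identity
  have key : Pxx⁻¹ - A⁻¹ = A⁻¹ * (f * Pxx⁻¹ * f + f) * A⁻¹ := by
    have e1 : f * Pxx⁻¹ * f + f = f * Pxx⁻¹ * A := by
      rw [hAdef, mul_add, mul_assoc f Pxx⁻¹ Pxx, hX2, mul_one]
    rw [e1]
    have : A⁻¹ * (f * Pxx⁻¹ * A) * A⁻¹ = A⁻¹ * f * Pxx⁻¹ := by
      rw [show A⁻¹ * (f * Pxx⁻¹ * A) * A⁻¹ = A⁻¹ * f * Pxx⁻¹ * (A * A⁻¹) by
        simp only [Matrix.mul_assoc], hA1, Matrix.mul_one]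
    rw [this]
    have hfA : f = A - Pxx := by rw [hAdef]; abel
    rw [hfA, Matrix.mul_sub, Matrix.sub_mul, hA2, Matrix.one_mul,
      Matrix.mul_assoc A⁻¹ Pxx Pxx⁻¹,
      Pxx.mul_nonsing_inv (isUnit_iff_ne_zero.mpr hPxx.det_pos.ne'), Matrix.mul_one]
  -- the inner matrix is PSD
  have hN : (f * Pxx⁻¹ * f + f).PosSemidef := by
    have := (hPxx.posSemidef.inv).mul_mul_conjTranspose_same f
    rw [hf.isHermitian] at this
    exact this.add hf
  have hM : (Pxx⁻¹ - A⁻¹).PosSemidef := by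
    rw [key]
    have := hN.mul_mul_conjTranspose_same A⁻¹
    rwa [(hA.posSemidef.inv).isHermitian] at this
  -- rewrite goal
  have hgoal : (Pyy - Pyx * A⁻¹ * Pxy) - (Pyy - Pyx * Pxx⁻¹ * Pxy)
      = Pyx * (Pxx⁻¹ - A⁻¹) * Pyxᵀ := by
    rw [hPxy, Matrix.mul_sub, Matrix.sub_mul]; abel
  rw [hgoal]
  have := hM.mul_mul_conjTranspose_same Pyx
  simpa using this
end
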